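/- If P is odd and Q ≡ 1 (mod 4), then U_17(P,Q) ≡ 3 (mod 4), hence U_17(P,Q) is not a perfect square. -/

import Mathlib

/-!
Reducing modulo 4, `P ≡ ±1` and `Q ≡ 1`, so `U₁₇(P, Q) ≡ U₁₇(±1, 1) = -1 (mod 4)`;
squares are `0` or `1` modulo 4.
-/

def lucasU (P Q : ℤ) : ℕ → ℤ
  | 0 => 0
  | 1 => 1
  | (n + 2) => P * lucasU P Q (n + 1) - Q * lucasU P Q n

theorem lucasU_modEq {m P Q P' Q' : ℤ} (hP : P ≡ P' [ZMOD m]) (hQ : Q ≡ Q' [ZMOD m]) (n : ℕ) :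
    lucasU P Q n ≡ lucasU P' Q' n [ZMOD m] := by
  induction n using Nat.strong_induction_on with
  | _ n ih =>
    match n with
    | 0 => rfl
    | 1 => rfl
    | n + 2 =>
      simpa only [lucasU] using
        (hP.mul (ih (n + 1) (by omega))).sub (hQ.mul (ih n (by omega)))

theorem Int.sq_not_modEq_three_four (k : ℤ) : ¬ k ^ 2 ≡ 3 [ZMOD 4] := by
  intro h
  have h4 := (ZMod.intCast_eq_intCast_iff (k ^ 2) 3 4).2 h
  push_cast at h4
  generalize (k : ZMod 4) = a at h4
  revert a
  decide

theorem Int.modEq_one_or_neg_one_four_of_odd {P : ℤ} (hP : Odd P) :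
    P ≡ 1 [ZMOD 4] ∨ P ≡ -1 [ZMOD 4] := by
  obtain ⟨k, rfl⟩ := hP
  simp only [Int.ModEq]
  omega

theorem stmt18 (P Q : ℤ) (hP : Odd P) (hQ4 : Q % 4 = 1) :
    lucasU P Q 17 ≡ 3 [ZMOD 4] ∧ ¬ ∃ k : ℤ, lucasU P Q 17 = k ^ 2 := by
  have hQ : Q ≡ 1 [ZMOD 4] := hQ4
  have hU : lucasU P Q 17 ≡ 3 [ZMOD 4] := by
    rcases Int.modEq_one_or_neg_one_four_of_odd hP with h | h
    · exact (lucasU_modEq h hQ 17).trans (by decide)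
    · exact (lucasU_modEq h hQ 17).trans (by decide)
  refine ⟨hU, ?_⟩
  rintro ⟨k, hk⟩
  exact Int.sq_not_modEq_three_four k (hk ▸ hU)
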